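/- Fix an integer n ≥ 1, let Ω ⊆ ℝ² be open with coordinates (t, s), and let u₁, …, u_n, R : Ω → M₂ be differentiable matrix-valued functions. Define B(λ) := Σ_{k=1}^{n} u_k(t,s) λ^{n−k} + σ₃λⁿ and C(λ) := −R(t,s)/(λ−s). Suppose that for every (t,s) ∈ Ω and every real λ ≠ s, the Zakharov–Shabat equation ∂_s B(λ) − ∂_t C(λ) + [B(λ), C(λ)] = 0 holds (where ∂_s B(λ) = Σ_{k=1}^{n} ∂_s u_k·λ^{n−k} and ∂_t C(λ) = −∂_t R/(λ−s)). Then at every point of Ω: ∂_t R = [ Σ_{l=1}^{n} s^{n−l} u_l + sⁿσ₃, R ], and for each k = 1, …, n: ∂_s u_k = [ Σ_{l=1}^{k−1} s^{k−l−1} u_l + s^{k−1}σ₃, R ]. (Here t plays the role of t_n, s of a_m, R of R_m; these are equations (2.62) of the paper, extracted from the Zakharov–Shabat system (2.35).) -/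

import Mathlib

noncomputable section

attribute [local instance] Matrix.normedAddCommGroup Matrix.normedSpace

/-- The Pauli matrix `σ₃ = diag(1, -1)`. -/
def sigma3 : Matrix (Fin 2) (Fin 2) ℂ := !![1, 0; 0, -1]

/-- The commutator `[X, Y] = X*Y - Y*X` of 2×2 complex matrices. -/
def matComm (X Y : Matrix (Fin 2) (Fin 2) ℂ) : Matrix (Fin 2) (Fin 2) ℂ :=
  X * Y - Y * X

/-- Partial derivative in the first variable `t`. -/
def pdT (F : ℝ × ℝ → Matrix (Fin 2) (Fin 2) ℂ) (p : ℝ × ℝ) :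
    Matrix (Fin 2) (Fin 2) ℂ :=
  fderiv ℝ F p (1, 0)

/-- Partial derivative in the second variable `s`. -/
def pdS (F : ℝ × ℝ → Matrix (Fin 2) (Fin 2) ℂ) (p : ℝ × ℝ) :
    Matrix (Fin 2) (Fin 2) ℂ :=
  fderiv ℝ F p (0, 1)

abbrev M2' := Matrix (Fin 2) (Fin 2) ℂ

lemma matComm_add_left (X Y Z : M2') : matComm (X + Y) Z = matComm X Z + matComm Y Z := by
  simp only [matComm, add_mul, mul_add]; abel

lemma matComm_smul_left (c : ℂ) (X Z : M2') : matComm (c • X) Z = c • matComm X Z := by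
  simp [matComm, Matrix.smul_mul, Matrix.mul_smul, smul_sub]

lemma matComm_neg_smul_right (c : ℂ) (X Y : M2') :
    matComm X (-(c • Y)) = -(c • matComm X Y) := by
  simp only [matComm, Matrix.smul_mul, Matrix.mul_smul, smul_sub, mul_neg, neg_mul, neg_sub,
    smul_neg]
  abel

lemma matComm_sum_left {ι : Type*} (s : Finset ι) (f : ι → M2') (Z : M2') :
    matComm (∑ i ∈ s, f i) Z = ∑ i ∈ s, matComm (f i) Z := by
  simp only [matComm, Finset.sum_mul, Finset.mul_sum, Finset.sum_sub_distrib]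

lemma coeffs_eq_zero {m : ℕ} (A : ℕ → M2') (s : ℝ)
    (h : ∀ lam : ℝ, lam ≠ s → ∑ j ∈ Finset.range m, ((lam:ℂ))^j • A j = 0) :
    ∀ j < m, A j = 0 := by
  intro j hj
  ext i i'
  set q : Polynomial ℂ := ∑ j ∈ Finset.range m, Polynomial.monomial j (A j i i') with hq
  have heval : ∀ lam : ℝ, lam ≠ s → q.eval (lam:ℂ) = 0 := by
    intro lam hl
    have h2 := congrArg (fun X : M2' => X i i') (h lam hl)
    simp only [Matrix.sum_apply, Matrix.smul_apply, Matrix.zero_apply, smul_eq_mul] at h2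
    simp only [hq, Polynomial.eval_finset_sum, Polynomial.eval_monomial]
    rw [← h2]
    exact Finset.sum_congr rfl (fun j _ => by ring)
  have hq0 : q = 0 := by
    apply Polynomial.eq_zero_of_infinite_isRoot
    have hsub : (fun x : ℝ => (x:ℂ)) '' {x | x ≠ s} ⊆ {x | q.IsRoot x} := by
      rintro z ⟨x, hx, rfl⟩
      exact heval x hx
    have hinf : ((fun x : ℝ => (x:ℂ)) '' {x | x ≠ s}).Infinite :=
      Set.Infinite.image (Set.injOn_of_injective Complex.ofReal_injective)
        (Set.Finite.infinite_compl (Set.finite_singleton s))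
    exact hinf.mono hsub
  have := congrArg (fun p => Polynomial.coeff p j) hq0
  simpa [hq, Polynomial.coeff_monomial, Finset.sum_ite_eq, hj] using this

lemma sum_Icc_eq_sum_range' (n : ℕ) (g : ℕ → M2') :
    ∑ k ∈ Finset.Icc 1 n, g k = ∑ j ∈ Finset.range n, g (n - j) := by
  refine Finset.sum_nbij' (i := fun k => n - k) (j := fun j => n - j) ?_ ?_ ?_ ?_ ?_ <;>
    intro a ha <;>
    simp only [Finset.mem_Icc, Finset.mem_range] at ha ⊢
  · omega
  · omega
  · omega
  · omega
  · have : n - (n - a) = a := by omega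
    rw [this]

lemma reindex1 (n : ℕ) (lam : ℂ) (f : ℕ → M2') :
    ∑ k ∈ Finset.Icc 1 n, lam ^ (n - k) • f k
      = ∑ j ∈ Finset.range n, lam ^ j • f (n - j) := by
  rw [sum_Icc_eq_sum_range']
  refine Finset.sum_congr rfl fun j hj => ?_
  simp only [Finset.mem_range] at hj
  have : n - (n - j) = j := by omega
  rw [this]

lemma key_identity (m : ℕ) (lam s : ℂ) (D U : ℕ → M2') (T Rp : M2') :
    ∑ j ∈ Finset.range (m + 2), lam ^ j •
        (if j = m + 1 then D 1 - matComm sigma3 Rp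
         else if j = 0 then T - s • D (m + 1) - matComm (U (m + 1)) Rp
         else D (m + 1 - j + 1) - s • D (m + 1 - j) - matComm (U (m + 1 - j)) Rp)
      = (lam - s) • (∑ k ∈ Finset.Icc 1 (m + 1), lam ^ (m + 1 - k) • D k)
        + (T - matComm ((∑ k ∈ Finset.Icc 1 (m + 1), lam ^ (m + 1 - k) • U k)
            + lam ^ (m + 1) • sigma3) Rp) := by
  -- expand the commutator on the right
  rw [matComm_add_left, matComm_smul_left, matComm_sum_left]
  simp only [matComm_smul_left]
  -- reindex the Icc sums as range sums
  rw [reindex1 (m + 1) lam D, reindex1 (m + 1) lam (fun k => matComm (U k) Rp)]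
  rw [sub_smul]
  have e2 : lam • ∑ j ∈ Finset.range (m + 1), lam ^ j • D (m + 1 - j)
      = ∑ j ∈ Finset.range (m + 1), lam ^ (j + 1) • D (m + 1 - j) := by
    rw [Finset.smul_sum]
    exact Finset.sum_congr rfl fun j _ => by rw [smul_smul, ← pow_succ']
  have e3 : s • ∑ j ∈ Finset.range (m + 1), lam ^ j • D (m + 1 - j)
      = ∑ j ∈ Finset.range (m + 1), lam ^ j • (s • D (m + 1 - j)) := by
    rw [Finset.smul_sum]
    exact Finset.sum_congr rfl fun j _ => smul_comm _ _ _
  rw [e2, e3]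
  -- split left sum: top and bottom
  rw [Finset.sum_range_succ, Finset.sum_range_succ']
  rw [if_pos rfl, if_neg (by omega : ¬ (0 = m + 1)), if_pos rfl]
  have eLmid : ∀ j ∈ Finset.range m,
      lam ^ (j + 1) •
        (if j + 1 = m + 1 then D 1 - matComm sigma3 Rp
         else if j + 1 = 0 then T - s • D (m + 1) - matComm (U (m + 1)) Rp
         else D (m + 1 - (j + 1) + 1) - s • D (m + 1 - (j + 1))
              - matComm (U (m + 1 - (j + 1))) Rp)
      = lam ^ (j + 1) • D (m + 1 - j) - lam ^ (j + 1) • (s • D (m - j))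
          - lam ^ (j + 1) • matComm (U (m - j)) Rp := by
    intro j hj
    simp only [Finset.mem_range] at hj
    rw [if_neg (by omega), if_neg (by omega)]
    have h1 : m + 1 - (j + 1) + 1 = m + 1 - j := by omega
    have h2 : m + 1 - (j + 1) = m - j := by omega
    rw [h1, h2, smul_sub, smul_sub]
  rw [Finset.sum_congr rfl eLmid]
  -- split right sums
  rw [Finset.sum_range_succ (f := fun j => lam ^ (j + 1) • D (m + 1 - j))]
  have etop : m + 1 - m = 1 := by omega
  rw [etop]
  rw [Finset.sum_range_succ' (f := fun j => lam ^ j • (s • D (m + 1 - j)))]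
  rw [Finset.sum_range_succ' (f := fun j => lam ^ j • matComm (U (m + 1 - j)) Rp)]
  have emid : ∀ j ∈ Finset.range m,
      lam ^ (j + 1) • (s • D (m + 1 - (j + 1))) = lam ^ (j + 1) • (s • D (m - j)) := by
    intro j hj
    have h2 : m + 1 - (j + 1) = m - j := by omega
    rw [h2]
  have emid2 : ∀ j ∈ Finset.range m,
      lam ^ (j + 1) • matComm (U (m + 1 - (j + 1))) Rp
        = lam ^ (j + 1) • matComm (U (m - j)) Rp := by
    intro j hj
    have h2 : m + 1 - (j + 1) = m - j := by omega
    rw [h2]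
  rw [Finset.sum_congr rfl emid, Finset.sum_congr rfl emid2]
  simp only [Finset.sum_sub_distrib, pow_zero, one_smul, Nat.sub_zero, smul_sub]
  abel

lemma Gstep (k : ℕ) (hk : 1 ≤ k) (s : ℂ) (U : ℕ → M2') :
    s • ((∑ l ∈ Finset.Icc 1 (k - 1), s ^ (k - l - 1) • U l) + s ^ (k - 1) • sigma3) + U k
      = (∑ l ∈ Finset.Icc 1 k, s ^ (k - l) • U l) + s ^ k • sigma3 := by
  obtain ⟨k', rfl⟩ : ∃ k', k = k' + 1 := ⟨k - 1, by omega⟩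
  simp only [Nat.add_sub_cancel]
  rw [Finset.sum_Icc_succ_top (by omega : 1 ≤ k' + 1), smul_add, Finset.smul_sum]
  have h1 : ∀ l ∈ Finset.Icc 1 k', s • (s ^ (k' + 1 - l - 1) • U l) = s ^ (k' + 1 - l) • U l := by
    intro l hl
    simp only [Finset.mem_Icc] at hl
    rw [smul_smul, ← pow_succ']
    have : k' + 1 - l - 1 + 1 = k' + 1 - l := by omega
    rw [this]
  rw [Finset.sum_congr rfl h1, smul_smul, ← pow_succ']
  have h2 : k' + 1 - (k' + 1) = 0 := by omega
  rw [h2, pow_zero, one_smul]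
  abel

/-- equations (2.62) of the paper.
With `B(λ) = Σ_{k=1}^{n} u_k λ^{n-k} + σ₃λⁿ` and `C(λ) = -R/(λ-s)`, the
Zakharov–Shabat equation `∂_s B - ∂_t C + [B, C] = 0` for all `λ ≠ s` implies
`∂_t R = [Σ_{l=1}^n s^{n-l} u_l + sⁿσ₃, R]` and, for `1 ≤ k ≤ n`,
`∂_s u_k = [Σ_{l=1}^{k-1} s^{k-l-1} u_l + s^{k-1}σ₃, R]`. -/
theorem extended_nls_deformation_equations
    (n : ℕ) (hn : 1 ≤ n) (Ω : Set (ℝ × ℝ)) (hΩopen : IsOpen Ω)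
    (u : ℕ → ℝ × ℝ → Matrix (Fin 2) (Fin 2) ℂ)
    (R : ℝ × ℝ → Matrix (Fin 2) (Fin 2) ℂ)
    (hdu : ∀ k ∈ Finset.Icc 1 n, ∀ p ∈ Ω, DifferentiableAt ℝ (u k) p)
    (hdR : ∀ p ∈ Ω, DifferentiableAt ℝ R p)
    (hZS : ∀ p ∈ Ω, ∀ lam : ℝ, lam ≠ p.2 →
      (∑ k ∈ Finset.Icc 1 n, ((lam : ℂ)) ^ (n - k) • pdS (u k) p) -
        (-(((lam - p.2 : ℝ) : ℂ)⁻¹ • pdT R p)) +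
        matComm
          ((∑ k ∈ Finset.Icc 1 n, ((lam : ℂ)) ^ (n - k) • u k p) +
            (lam : ℂ) ^ n • sigma3)
          (-(((lam - p.2 : ℝ) : ℂ)⁻¹ • R p)) = 0) :
    ∀ p ∈ Ω,
      pdT R p =
        matComm
          ((∑ l ∈ Finset.Icc 1 n, ((p.2 : ℂ)) ^ (n - l) • u l p) +
            (p.2 : ℂ) ^ n • sigma3) (R p) ∧
      ∀ k ∈ Finset.Icc 1 n,
        pdS (u k) p =
          matComm
            ((∑ l ∈ Finset.Icc 1 (k - 1), ((p.2 : ℂ)) ^ (k - l - 1) • u l p) +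
              (p.2 : ℂ) ^ (k - 1) • sigma3) (R p) := by
  obtain ⟨m, rfl⟩ : ∃ m, n = m + 1 := ⟨n - 1, by omega⟩
  intro p hp
  set sC : ℂ := (p.2 : ℂ) with hsC
  set D : ℕ → M2' := fun k => pdS (u k) p with hD
  set T : M2' := pdT R p with hT
  set Rp : M2' := R p with hRp
  set A : ℕ → M2' := fun j =>
    if j = m + 1 then D 1 - matComm sigma3 Rp
    else if j = 0 then T - sC • D (m + 1) - matComm (u (m + 1) p) Rp
    else D (m + 1 - j + 1) - sC • D (m + 1 - j) - matComm (u (m + 1 - j) p) Rp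
    with hA
  have hAzero : ∀ j < m + 2, A j = 0 := by
    apply coeffs_eq_zero A p.2
    intro lam hl
    have h := hZS p hp lam hl
    set c : ℂ := ((lam - p.2 : ℝ) : ℂ) with hc
    have hcne : c ≠ 0 := by
      rw [hc]
      exact_mod_cast sub_ne_zero.mpr hl
    rw [matComm_neg_smul_right] at h
    set S : M2' := ∑ k ∈ Finset.Icc 1 (m + 1), ((lam : ℂ)) ^ (m + 1 - k) • D k with hS
    set B : M2' := (∑ k ∈ Finset.Icc 1 (m + 1), ((lam : ℂ)) ^ (m + 1 - k) • u k p)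
      + (lam : ℂ) ^ (m + 1) • sigma3 with hB
    have h3 : c • S + (T - matComm B Rp) = 0 := by
      have h2 := congrArg (fun X : M2' => c • X) h
      simp only [smul_add, smul_sub, smul_neg, neg_neg, smul_smul,
        mul_inv_cancel₀ hcne, one_smul, smul_zero] at h2
      rw [← h2]
      abel
    have hkey := key_identity m (lam : ℂ) sC D (fun k => u k p) T Rp
    have hcs : c = (lam : ℂ) - sC := by
      rw [hc, hsC]; push_cast; ring
    rw [hA]
    rw [hkey, ← hcs, hS] at *
    exact h3
  have hA_top : D 1 = matComm sigma3 Rp := by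
    have h := hAzero (m + 1) (by omega)
    rw [hA] at h
    beta_reduce at h
    rw [if_pos rfl] at h
    exact sub_eq_zero.mp h
  have hA_zero : T = sC • D (m + 1) + matComm (u (m + 1) p) Rp := by
    have h := hAzero 0 (by omega)
    rw [hA] at h
    beta_reduce at h
    rw [if_neg (by omega), if_pos rfl] at h
    have := sub_eq_zero.mp h
    rw [sub_eq_iff_eq_add] at this
    rw [this]; abel
  have hA_mid : ∀ k, 1 ≤ k → k ≤ m → D (k + 1) = sC • D k + matComm (u k p) Rp := by
    intro k h1 h2
    have h := hAzero (m + 1 - k) (by omega)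
    rw [hA] at h
    beta_reduce at h
    rw [if_neg (by omega), if_neg (by omega)] at h
    have e1 : m + 1 - (m + 1 - k) = k := by omega
    rw [e1] at h
    have := sub_eq_zero.mp h
    rw [sub_eq_iff_eq_add] at this
    rw [this]; abel
  have claim2 : ∀ k, 1 ≤ k → k ≤ m + 1 →
      D k = matComm ((∑ l ∈ Finset.Icc 1 (k - 1), sC ^ (k - l - 1) • u l p)
        + sC ^ (k - 1) • sigma3) Rp := by
    intro k hk
    induction k, hk using Nat.le_induction with
    | base =>
      intro _
      have : Finset.Icc 1 0 = (∅ : Finset ℕ) := by decide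
      simp [this, hA_top]
    | succ k hk ih =>
      intro hkn
      have hDk := ih (by omega)
      have hrec := hA_mid k hk (by omega)
      have harg : (∑ l ∈ Finset.Icc 1 (k + 1 - 1), sC ^ (k + 1 - l - 1) • u l p)
            + sC ^ (k + 1 - 1) • sigma3
          = (∑ l ∈ Finset.Icc 1 k, sC ^ (k - l) • u l p) + sC ^ k • sigma3 := by
        simp only [Nat.add_sub_cancel]
        congr 1
        apply Finset.sum_congr rfl
        intro l hl
        simp only [Finset.mem_Icc] at hl
        have : k + 1 - l - 1 = k - l := by omega
        rw [this]
      rw [hrec, hDk, ← matComm_smul_left, ← matComm_add_left, Gstep k hk, harg]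
  constructor
  · have hDn := claim2 (m + 1) (by omega) (by omega)
    rw [hA_zero, hDn, ← matComm_smul_left, ← matComm_add_left,
      Gstep (m + 1) (by omega)]
  · intro k hk
    simp only [Finset.mem_Icc] at hk
    exact claim2 k hk.1 hk.2
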